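/- The operator U_1 = -T_1 - Z satisfies U_1² = u_1²·𝟙 on functions f : ℂ → ℂ (away from z = 0). -/

import Mathlib

/-!
Writing `c z = (t₁ + u₁ + z)(t₁ - u₁ + z) / (2z)`, the operator is `(U₁ f)(z) = a(z) f(z) + b(z) f(-z)`
with `a(z) = c(z) - t₁ - z` and `b(z) = -c(z)`. Squaring such an operator gives
`(a(z)² + b(z) b(-z)) f(z) + b(z) (a(z) + a(-z)) f(-z)`. The identity `c(z) + c(-z) = 2 t₁` makes `a`
odd, so the reflected term vanishes, and together with `2 z c(z) = (t₁ + z)² - u₁²` it collapses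
the remaining coefficient to `u₁²`.
-/

noncomputable def T1op (t1 u1 : ℂ) (f : ℂ → ℂ) : ℂ → ℂ :=
  fun z => (t1 + u1 + z) * (t1 - u1 + z) / (2 * z) * (f (-z) - f z) + t1 * f z

/-- `U₁ = -T₁ - Z`, where `Z` is multiplication by `z`. -/
noncomputable def U1op (t1 u1 : ℂ) (f : ℂ → ℂ) : ℂ → ℂ :=
  fun z => -(T1op t1 u1 f z) - z * f z

def reflectionOp {α R : Type*} [Neg α] [Mul R] [Add R] (a b : α → R) (f : α → R) : α → R :=
  fun x => a x * f x + b x * f (-x)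

theorem reflectionOp_reflectionOp {α R : Type*} [InvolutiveNeg α] [CommSemiring R]
    (a b f : α → R) (x : α) :
    reflectionOp a b (reflectionOp a b f) x =
      (a x ^ 2 + b x * b (-x)) * f x + b x * (a x + a (-x)) * f (-x) := by
  simp only [reflectionOp, neg_neg]
  ring

noncomputable def T1coeff (t1 u1 z : ℂ) : ℂ :=
  (t1 + u1 + z) * (t1 - u1 + z) / (2 * z)

theorem T1coeff_add_T1coeff_neg (t1 u1 : ℂ) {z : ℂ} (hz : z ≠ 0) :
    T1coeff t1 u1 z + T1coeff t1 u1 (-z) = 2 * t1 := by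
  unfold T1coeff
  field_simp
  ring

theorem two_mul_mul_T1coeff (t1 u1 : ℂ) {z : ℂ} (hz : z ≠ 0) :
    2 * z * T1coeff t1 u1 z = (t1 + u1 + z) * (t1 - u1 + z) := by
  unfold T1coeff
  field_simp

theorem U1op_eq_reflectionOp (t1 u1 : ℂ) (f : ℂ → ℂ) :
    U1op t1 u1 f =
      reflectionOp (fun z => T1coeff t1 u1 z - t1 - z) (fun z => -T1coeff t1 u1 z) f := by
  funext z
  simp only [U1op, T1op, T1coeff, reflectionOp]
  ring

/-- `U₁² = u₁² 𝟙` away from `z = 0`. -/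
theorem U1_sq (t1 u1 : ℂ) (f : ℂ → ℂ) (z : ℂ) (hz : z ≠ 0) :
    U1op t1 u1 (U1op t1 u1 f) z = u1 ^ 2 * f z := by
  rw [U1op_eq_reflectionOp, U1op_eq_reflectionOp, reflectionOp_reflectionOp]
  have hneg : T1coeff t1 u1 (-z) = 2 * t1 - T1coeff t1 u1 z := by
    linear_combination T1coeff_add_T1coeff_neg t1 u1 hz
  rw [hneg]
  linear_combination (-f z) * two_mul_mul_T1coeff t1 u1 hz
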